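/- If A is a 4×4 complex Hadamard matrix in dephased form and some entry of A is not a real number, then the trace of A is not a real number. -/

import Mathlib

open Matrix Polynomial Complex

/-- A 4×4 complex Hadamard matrix: unitary with all entries of absolute value `1/√4`. -/
def IsHadamard (H : Matrix (Fin 4) (Fin 4) ℂ) : Prop :=
  H * Hᴴ = 1 ∧ Hᴴ * H = 1 ∧ ∀ i j, ‖H i j‖ = 1 / Real.sqrt 4

/-- Dephased form: all entries of the 0th row and 0th column equal `1/√4`. -/
def IsDephased (H : Matrix (Fin 4) (Fin 4) ℂ) : Prop :=
  (∀ j, H 0 j = ((1 / Real.sqrt 4 : ℝ) : ℂ)) ∧ (∀ i, H i 0 = ((1 / Real.sqrt 4 : ℝ) : ℂ))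

/-!
Scaling a dephased 4×4 complex Hadamard matrix by `2` and deleting its first row and column
leaves a 3×3 core `M` of unimodular numbers with all row and column sums `-1` and with
`∑ j, M i j * conj (M i' j) = -1` for `i ≠ i'`. Three unimodular numbers with sum `-1` are `-1`
together with an opposite pair, because the sum and its conjugate give
`(1 + x) * (1 + y) * (1 + z) = 0`. So every row of `M` is `-1, u, -u` in some order, and in each
of the 27 possible arrangements the column sums, the orthogonality relations and a real trace
force the remaining entries to be real.
-/

open ComplexConjugate

theorem Complex.eq_neg_one_of_add_add_eq_neg_one {x y z : ℂ} (hx : ‖x‖ = 1) (hy : ‖y‖ = 1)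
    (hz : ‖z‖ = 1) (h : x + y + z = -1) :
    x = -1 ∧ z = -y ∨ y = -1 ∧ z = -x ∨ z = -1 ∧ y = -x := by
  have hconj : conj x + conj y + conj z = -1 := by simpa using congrArg conj h
  have unit {w : ℂ} (hw : ‖w‖ = 1) : w * conj w = 1 := by simp [mul_conj', hw]
  have hprod : (1 + x) * (1 + y) * (1 + z) = 0 := by
    linear_combination h + x * y * z * hconj - y * z * unit hx - x * z * unit hy - x * y * unit hz
  rcases mul_eq_zero.1 hprod with hxy | hz1
  · rcases mul_eq_zero.1 hxy with hx1 | hy1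
    · exact Or.inl ⟨by linear_combination hx1, by linear_combination h - hx1⟩
    · exact Or.inr (Or.inl ⟨by linear_combination hy1, by linear_combination h - hy1⟩)
  · exact Or.inr (Or.inr ⟨by linear_combination hz1, by linear_combination h - hz1⟩)

theorem im_apply_eq_zero_of_im_trace_eq_zero (M : Matrix (Fin 3) (Fin 3) ℂ)
    (hunit : ∀ i j, ‖M i j‖ = 1) (hrow : ∀ i, ∑ j, M i j = -1) (hcol : ∀ j, ∑ i, M i j = -1)
    (horth : ∀ i i', i ≠ i' → ∑ j, M i j * conj (M i' j) = -1) (htr : M.trace.im = 0) :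
    ∀ i j, (M i j).im = 0 := by
  have hpair i := eq_neg_one_of_add_add_eq_neg_one (hunit i 0) (hunit i 1) (hunit i 2)
    (by simpa [Fin.sum_univ_three] using hrow i)
  have hunit' i j : M i j * conj (M i j) = 1 := by simp [mul_conj', hunit]
  simp only [← conj_eq_iff_im] at htr ⊢
  obtain ⟨a, b, c, d, e, f, g, k, m, rfl⟩ :
      ∃ a b c d e f g k m, M = !![a, b, c; d, e, f; g, k, m] :=
    ⟨_, _, _, _, _, _, _, _, _, M.eta_fin_three⟩
  simp only [of_apply, cons_val, Fin.forall_fin_succ, Fin.sum_univ_three, Fin.succ_zero_eq_one,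
    Fin.succ_one_eq_two, IsEmpty.forall_iff, trace_fin_three]
    at hpair hunit' hcol horth htr ⊢
  obtain ⟨r1, r2, r3⟩ := hpair
  rcases r1 with ⟨rfl, rfl⟩ | ⟨rfl, rfl⟩ | ⟨rfl, rfl⟩ <;>
  rcases r2 with ⟨rfl, rfl⟩ | ⟨rfl, rfl⟩ | ⟨rfl, rfl⟩ <;>
  rcases r3 with ⟨rfl, rfl⟩ | ⟨rfl, rfl⟩ | ⟨rfl, rfl⟩ <;>
  grind

theorem Real.sqrt_four : √4 = 2 := by
  rw [show (4 : ℝ) = 2 ^ 2 by norm_num, Real.sqrt_sq zero_le_two]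

def scaledCore (A : Matrix (Fin 4) (Fin 4) ℂ) : Matrix (Fin 3) (Fin 3) ℂ :=
  of fun i j => 2 * A i.succ j.succ

section

variable {A : Matrix (Fin 4) (Fin 4) ℂ}

theorem scaledCore_apply (i j : Fin 3) : scaledCore A i j = 2 * A i.succ j.succ := rfl

theorem IsDephased.row_zero (hA' : IsDephased A) (j : Fin 4) : A 0 j = 1 / 2 := by
  simp [hA'.1 j, Real.sqrt_four]

theorem IsDephased.col_zero (hA' : IsDephased A) (i : Fin 4) : A i 0 = 1 / 2 := by
  simp [hA'.2 i, Real.sqrt_four]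

theorem trace_scaledCore (hA' : IsDephased A) : (scaledCore A).trace = 2 * A.trace - 1 := by
  simp only [trace, diag, Fin.sum_univ_succ (f := fun i => A i i), hA'.row_zero,
    scaledCore_apply, ← Finset.mul_sum]
  ring

namespace IsHadamard

variable (hA : _root_.IsHadamard A)
include hA

theorem sum_mul_conj (p q : Fin 4) :
    ∑ j, A p j * conj (A q j) = (1 : Matrix (Fin 4) (Fin 4) ℂ) p q := by
  simpa [mul_apply] using congrFun₂ hA.1 p q

theorem sum_conj_mul (p q : Fin 4) :
    ∑ i, conj (A i p) * A i q = (1 : Matrix (Fin 4) (Fin 4) ℂ) p q := by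
  simpa [mul_apply] using congrFun₂ hA.2.1 p q

theorem norm_scaledCore_apply (i j : Fin 3) : ‖scaledCore A i j‖ = 1 := by
  simp [scaledCore_apply, hA.2.2, Real.sqrt_four]

variable (hA' : IsDephased A)
include hA'

theorem sum_row_eq_zero {p : Fin 4} (hp : p ≠ 0) : ∑ j, A p j = 0 := by
  have h := hA.sum_mul_conj p 0
  simp only [hA'.row_zero, ← Finset.sum_mul, one_apply_ne hp] at h
  simpa using h

theorem sum_col_eq_zero {q : Fin 4} (hq : q ≠ 0) : ∑ i, A i q = 0 := by
  have h := hA.sum_conj_mul 0 q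
  simp only [hA'.col_zero, ← Finset.mul_sum, one_apply_ne hq.symm] at h
  simpa using h

theorem sum_scaledCore_row (i : Fin 3) : ∑ j, scaledCore A i j = -1 := by
  have h := hA.sum_row_eq_zero hA' i.succ_ne_zero
  rw [Fin.sum_univ_succ, hA'.col_zero] at h
  simp only [scaledCore_apply, ← Finset.mul_sum]
  linear_combination 2 * h

theorem sum_scaledCore_col (j : Fin 3) : ∑ i, scaledCore A i j = -1 := by
  have h := hA.sum_col_eq_zero hA' j.succ_ne_zero
  rw [Fin.sum_univ_succ, hA'.row_zero] at h
  simp only [scaledCore_apply, ← Finset.mul_sum]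
  linear_combination 2 * h

theorem sum_scaledCore_mul_conj {i i' : Fin 3} (hii' : i ≠ i') :
    ∑ j, scaledCore A i j * conj (scaledCore A i' j) = -1 := by
  have h := hA.sum_mul_conj i.succ i'.succ
  rw [Fin.sum_univ_succ, hA'.col_zero, hA'.col_zero,
    one_apply_ne (Fin.succ_injective _ |>.ne hii')] at h
  simp only [map_div₀, map_one, map_ofNat] at h
  simp only [scaledCore_apply, map_mul, map_ofNat, mul_mul_mul_comm, ← Finset.mul_sum]
  linear_combination 4 * h

end IsHadamard

end

theorem nonreal_entry_implies_nonreal_trace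
    (A : Matrix (Fin 4) (Fin 4) ℂ)
    (hA : _root_.IsHadamard A) (hA' : IsDephased A)
    (h : ∃ i j, (A i j).im ≠ 0) :
    (A.trace).im ≠ 0 := by
  intro htr
  have hcore := im_apply_eq_zero_of_im_trace_eq_zero (scaledCore A) hA.norm_scaledCore_apply
    (hA.sum_scaledCore_row hA') (hA.sum_scaledCore_col hA')
    (fun _ _ => hA.sum_scaledCore_mul_conj hA') (by simp [trace_scaledCore hA', htr])
  obtain ⟨i, j, hij⟩ := h
  refine hij ?_
  cases i using Fin.cases with
  | zero => simp [hA'.row_zero]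
  | succ i =>
    cases j using Fin.cases with
    | zero => simp [hA'.col_zero]
    | succ j => simpa [scaledCore_apply] using hcore i j
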